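/- Every candidate in the k-approval veto core has egalitarian metric distortion at most 3: if the k-domination graph of w has a perfect matching, then for every consistent metric d and every candidate c*, max_v d(v,w) ≤ 3 · max_v d(v,c*). -/

import Mathlib

/-!
If some voter `u` weakly prefers `c` to `c'`, then for every voter `v` the detour
`v → c' → u → c` bounds `d(v, c)` by three times the egalitarian cost of `c'`.
This settles the theorem unless `c*` Pareto-dominates `w`. In that case no voter ranks `c*`
among its top `k` (otherwise the matching would pair a copy of `c*` with a voter preferring
`w` to it), so the partner `c` of any voter `v` in the matching, which some voter approves,
is not Pareto-dominated by `c*`; and `d(v, w) ≤ d(v, c)` since `v` weakly prefers `w` to `c`.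
-/

/-- Voter `v` prefers candidate `c` over `c'` (lower rank is better). -/
def Prefers {V C : Type*} {m : ℕ} (rank : V → C ≃ Fin m) (v : V) (c c' : C) : Prop :=
  rank v c < rank v c'

/-- The `k`-approval score of candidate `c`. -/
def apv {V C : Type*} [Fintype V] {m : ℕ} (rank : V → C ≃ Fin m) (k : ℕ) (c : C) : ℕ :=
  (Finset.univ.filter fun v => ((rank v c : Fin m) : ℕ) < k).card

/-- The `k`-domination graph of `w` has a perfect matching (characterizing membership
in the `k`-approval veto core). -/
def HasPerfectMatching {V C : Type*} [Fintype V] {m : ℕ} (rank : V → C ≃ Fin m)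
    (k : ℕ) (w : C) : Prop :=
  ∃ f : (V × Fin k) ≃ (Σ c : C, Fin (apv rank k c)),
    ∀ p : V × Fin k, rank p.1 w ≤ rank p.1 (f p).1

open Finset

section

variable {V C : Type*} {m : ℕ} (rank : V → C ≃ Fin m)

def ParetoDominates (c' c : C) : Prop :=
  ∀ v, Prefers rank v c' c

def IsConsistent (d : V ⊕ C → V ⊕ C → ℝ) : Prop :=
  ∀ (v : V) (c c' : C), Prefers rank v c c' → d (.inl v) (.inr c) ≤ d (.inl v) (.inr c')

def egalitarianCost [Fintype V] [Nonempty V] (d : V ⊕ C → V ⊕ C → ℝ) (c : C) : ℝ :=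
  univ.sup' univ_nonempty fun v => d (.inl v) (.inr c)

variable {rank}

theorem IsConsistent.dist_le_of_rank_le {d : V ⊕ C → V ⊕ C → ℝ} (hcons : IsConsistent rank d)
    {v : V} {c c' : C} (h : rank v c ≤ rank v c') :
    d (.inl v) (.inr c) ≤ d (.inl v) (.inr c') := by
  rcases h.lt_or_eq with hlt | heq
  · exact hcons v c c' hlt
  · rw [(rank v).injective heq]

theorem dist_le_egalitarianCost [Fintype V] [Nonempty V] (d : V ⊕ C → V ⊕ C → ℝ) (v : V)
    (c : C) : d (.inl v) (.inr c) ≤ egalitarianCost d c :=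
  le_sup' (fun v => d (.inl v) (.inr c)) (mem_univ v)

theorem egalitarianCost_le_three_mul_of_not_paretoDominates [Fintype V] [Nonempty V]
    {d : V ⊕ C → V ⊕ C → ℝ} (hsymm : ∀ x y, d x y = d y x)
    (htri : ∀ x y z, d x z ≤ d x y + d y z) (hcons : IsConsistent rank d) {c' c : C}
    (h : ¬ ParetoDominates rank c' c) :
    egalitarianCost d c ≤ 3 * egalitarianCost d c' := by
  obtain ⟨u, hu⟩ : ∃ u, rank u c ≤ rank u c' := by
    simpa [ParetoDominates, Prefers] using h
  have huc := hcons.dist_le_of_rank_le hu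
  refine sup'_le _ _ fun v _ => ?_
  have hvc' := htri (.inl v) (.inr c') (.inr c)
  have hc'c := htri (.inr c') (.inl u) (.inr c)
  have hc'u := hsymm (.inr c') (.inl u)
  linarith [dist_le_egalitarianCost d v c', dist_le_egalitarianCost d u c']

variable [Fintype V] {k : ℕ} {w : C}

theorem HasPerfectMatching.apv_eq_zero_of_paretoDominates (hcore : HasPerfectMatching rank k w)
    {c' : C} (hdom : ParetoDominates rank c' w) : apv rank k c' = 0 := by
  obtain ⟨f, hf⟩ := hcore
  by_contra hpos
  have hp := hf (f.symm ⟨c', ⟨0, Nat.pos_of_ne_zero hpos⟩⟩)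
  rw [f.apply_symm_apply] at hp
  exact (hdom _).not_ge hp

theorem HasPerfectMatching.exists_partner (hcore : HasPerfectMatching rank k w) (hk : 1 ≤ k)
    (v : V) : ∃ c, rank v w ≤ rank v c ∧ 0 < apv rank k c := by
  obtain ⟨f, hf⟩ := hcore
  exact ⟨(f (v, ⟨0, hk⟩)).1, hf (v, ⟨0, hk⟩), (f (v, ⟨0, hk⟩)).2.pos⟩

theorem not_paretoDominates_of_apv_eq_zero {c' c : C} (h' : apv rank k c' = 0)
    (h : 0 < apv rank k c) : ¬ ParetoDominates rank c' c := by
  obtain ⟨u, hu⟩ := card_pos.mp h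
  intro hdom
  have hc : ((rank u c : Fin m) : ℕ) < k := (mem_filter.mp hu).2
  have hc' : 0 < apv rank k c' :=
    card_pos.mpr ⟨u, mem_filter.mpr ⟨mem_univ u, Nat.lt_trans (hdom u) hc⟩⟩
  omega

end

theorem core_egalitarian_distortion_general {V C : Type*} [Fintype V] [Nonempty V] {m : ℕ}
    (rank : V → C ≃ Fin m) (k : ℕ) (hk : 1 ≤ k)
    (d : V ⊕ C → V ⊕ C → ℝ)
    (hsymm : ∀ x y, d x y = d y x)
    (htri : ∀ x y z, d x z ≤ d x y + d y z)
    (hcons : ∀ (v : V) (c c' : C), Prefers rank v c c' →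
      d (Sum.inl v) (Sum.inr c) ≤ d (Sum.inl v) (Sum.inr c'))
    (w : C) (hcore : HasPerfectMatching rank k w)
    (cstar : C) :
    Finset.univ.sup' Finset.univ_nonempty (fun v : V => d (Sum.inl v) (Sum.inr w)) ≤
      3 * Finset.univ.sup' Finset.univ_nonempty
        (fun v : V => d (Sum.inl v) (Sum.inr cstar)) := by
  have hcons : IsConsistent rank d := hcons
  by_cases hdom : ParetoDominates rank cstar w
  · have hzero := hcore.apv_eq_zero_of_paretoDominates hdom
    refine sup'_le _ _ fun v _ => ?_
    obtain ⟨c, hwc, hc⟩ := hcore.exists_partner hk v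
    calc d (.inl v) (.inr w) ≤ d (.inl v) (.inr c) := hcons.dist_le_of_rank_le hwc
      _ ≤ egalitarianCost d c := dist_le_egalitarianCost d v c
      _ ≤ 3 * egalitarianCost d cstar :=
        egalitarianCost_le_three_mul_of_not_paretoDominates hsymm htri hcons
          (not_paretoDominates_of_apv_eq_zero hzero hc)
  · exact egalitarianCost_le_three_mul_of_not_paretoDominates hsymm htri hcons hdom

/-- Every candidate in the `k`-approval veto core has egalitarian metric distortion
at most 3. -/
theorem core_egalitarian_distortion {V C : Type*} [Fintype V] [Nonempty V] {m : ℕ}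
    (rank : V → C ≃ Fin m) (k : ℕ) (hk : 1 ≤ k)
    (d : V ⊕ C → V ⊕ C → ℝ)
    (hrefl : ∀ x, d x x = 0)
    (hsymm : ∀ x y, d x y = d y x)
    (htri : ∀ x y z, d x z ≤ d x y + d y z)
    (hcons : ∀ (v : V) (c c' : C), Prefers rank v c c' →
      d (Sum.inl v) (Sum.inr c) ≤ d (Sum.inl v) (Sum.inr c'))
    (w : C) (hcore : HasPerfectMatching rank k w)
    (cstar : C) :
    Finset.univ.sup' Finset.univ_nonempty (fun v : V => d (Sum.inl v) (Sum.inr w)) ≤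
      3 * Finset.univ.sup' Finset.univ_nonempty
        (fun v : V => d (Sum.inl v) (Sum.inr cstar)) :=
  core_egalitarian_distortion_general rank k hk d hsymm htri hcons w hcore cstar
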